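/- arXiv:2306.04182 — 5 statements merged into one kernel-verified Lean document; each statement's English description precedes it below -/
import Mathlib

section
/- Let R be a norm on R^p and let M ⊆ M̄ be subspaces of R^p such that R is decomposable with respect to (M, M̄^⊥), i.e., R(θ + γ) = R(θ) + R(γ) for all θ ∈ M and γ ∈ M̄^⊥. Then for any θ* ∈ M and any Δ ∈ R^p, R(θ* + Δ) - R(θ*) ≥ R(Δ_{M̄^⊥}) - R(Δ_{M̄}), where Δ_{M̄} and Δ_{M̄^⊥} denote the orthogonal projections of Δ onto M̄ and M̄^⊥ respectively. -/
open scoped RealInnerProductSpace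

lemma AddGroupSeminormClass.sub_le_sub_of_map_add_eq {F E : Type*} [AddCommGroup E] [FunLike F E ℝ]
    [AddGroupSeminormClass F E ℝ] (f : F) {θ a b : E} (hsplit : f (θ + b) = f θ + f b) :
    f b - f a ≤ f (θ + (a + b)) - f θ := by
  have hrearrange : θ + b = θ + (a + b) - a := by abel
  have : f (θ + b) ≤ f (θ + (a + b)) + f a := hrearrange ▸ map_sub_le_add f _ _
  linarith

theorem stmt0_general {p : ℕ} (R : EuclideanSpace ℝ (Fin p) → ℝ)
    (hR_add : ∀ x y, R (x + y) ≤ R x + R y)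
    (hR_smul : ∀ (c : ℝ) (x : EuclideanSpace ℝ (Fin p)), R (c • x) = |c| * R x)
    (M Mbar : Submodule ℝ (EuclideanSpace ℝ (Fin p)))
    (hdecomp : ∀ θ ∈ M, ∀ γ ∈ Mbarᗮ, R (θ + γ) = R θ + R γ)
    (θs : EuclideanSpace ℝ (Fin p)) (hθs : θs ∈ M)
    (Δ : EuclideanSpace ℝ (Fin p)) :
    R ((Submodule.orthogonalProjectionOnto Mbarᗮ Δ : EuclideanSpace ℝ (Fin p)))
      - R ((Submodule.orthogonalProjectionOnto Mbar Δ : EuclideanSpace ℝ (Fin p)))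
      ≤ R (θs + Δ) - R θs := by
  let q : Seminorm ℝ (EuclideanSpace ℝ (Fin p)) := .of R hR_add fun c x ↦ hR_smul c x
  have hbound := AddGroupSeminormClass.sub_le_sub_of_map_add_eq q
    (a := (Submodule.orthogonalProjectionOnto Mbar Δ : EuclideanSpace ℝ (Fin p)))
    (hdecomp θs hθs _ (Submodule.orthogonalProjectionOnto Mbarᗮ Δ).2)
  have hsum : (Submodule.orthogonalProjectionOnto Mbar Δ : EuclideanSpace ℝ (Fin p))
      + Submodule.orthogonalProjectionOnto Mbarᗮ Δ = Δ :=
    Mbar.starProjection_add_starProjection_orthogonal Δ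
  rwa [hsum] at hbound

/-- Decomposable regularizers satisfy the key lower bound:
`R(θ* + Δ) - R(θ*) ≥ R(Δ_{M̄ᗮ}) - R(Δ_{M̄})` for `θ* ∈ M`. -/
theorem stmt0 {p : ℕ} (R : EuclideanSpace ℝ (Fin p) → ℝ)
    (hR_nonneg : ∀ x, 0 ≤ R x)
    (hR_add : ∀ x y, R (x + y) ≤ R x + R y)
    (hR_smul : ∀ (c : ℝ) (x : EuclideanSpace ℝ (Fin p)), R (c • x) = |c| * R x)
    (hR_def : ∀ x, R x = 0 → x = 0)
    (M Mbar : Submodule ℝ (EuclideanSpace ℝ (Fin p)))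
    (hMM : M ≤ Mbar)
    (hdecomp : ∀ θ ∈ M, ∀ γ ∈ Mbarᗮ, R (θ + γ) = R θ + R γ)
    (θs : EuclideanSpace ℝ (Fin p)) (hθs : θs ∈ M)
    (Δ : EuclideanSpace ℝ (Fin p)) :
    R ((Submodule.orthogonalProjectionOnto Mbarᗮ Δ : EuclideanSpace ℝ (Fin p)))
      - R ((Submodule.orthogonalProjectionOnto Mbar Δ : EuclideanSpace ℝ (Fin p)))
      ≤ R (θs + Δ) - R θs :=
  stmt0_general R hR_add hR_smul M Mbar hdecomp θs hθs Δ
end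

section
/- Let L : R^p → R be convex and differentiable, let R be a norm decomposable with respect to (M, M̄^⊥), and let R* denote its dual norm. Suppose θ̂ minimizes θ ↦ L(θ) + λR(θ) over R^p with λ ≥ 2 R*(∇L(θ*)). Then the error Δ = θ̂ − θ* satisfies R(Δ_{M̄^⊥}) ≤ 3 R(Δ_{M̄}) + 4 R(θ*_{M^⊥}), where subscripts denote orthogonal projections onto the indicated subspaces. -/
open scoped RealInnerProductSpace

/-! Optimality of `θ̂` against `θ*` together with the gradient inequality for `L` at `θ*` gives
`λ (R θ̂ - R θ*) ≤ -⟪∇L θ*, Δ⟫ ≤ R*(∇L θ*) R Δ ≤ (λ / 2) R Δ`. On the other hand, writing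
`θ̂ = (θ*_M + Δ_{M̄ᗮ}) + (θ*_{Mᗮ} + Δ_{M̄})`, decomposability and the triangle inequality give
`R θ̂ - R θ* ≥ R Δ_{M̄ᗮ} - R Δ_{M̄} - 2 R θ*_{Mᗮ}`. Comparing the two bounds, with
`R Δ ≤ R Δ_{M̄} + R Δ_{M̄ᗮ}`, yields the cone inequality. -/

open Set

section GradientInequality

variable {E : Type*} [NormedAddCommGroup E]

theorem ConvexOn.add_le_of_hasFDerivAt [NormedSpace ℝ E] {f : E → ℝ} {f' : E →L[ℝ] ℝ} {x : E}
    (hf : ConvexOn ℝ univ f) (hx : HasFDerivAt f f' x) (y : E) : f x + f' (y - x) ≤ f y := by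
  set ℓ : ℝ →ᵃ[ℝ] E := AffineMap.lineMap x y
  have hline : HasDerivAt (f ∘ ℓ) (f' (y - x)) 0 := by
    have hx' : HasFDerivAt f f' (ℓ 0) := by simpa [ℓ] using hx
    exact hx'.comp_hasDerivAt 0 AffineMap.hasDerivAt_lineMap
  have hconv : ConvexOn ℝ univ (f ∘ ℓ) := by simpa using hf.comp_affineMap ℓ
  have := hconv.le_slope_of_hasDerivAt (mem_univ 0) (mem_univ 1) zero_lt_one hline
  simp only [slope_def_field, Function.comp_apply, ℓ, AffineMap.lineMap_apply_zero,
    AffineMap.lineMap_apply_one, sub_zero, div_one] at this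
  linarith

theorem ConvexOn.add_inner_le_of_hasGradientAt [InnerProductSpace ℝ E] [CompleteSpace E]
    {f : E → ℝ} {g x : E} (hf : ConvexOn ℝ univ f) (hx : HasGradientAt f g x) (y : E) :
    f x + ⟪g, y - x⟫ ≤ f y := by
  simpa using hf.add_le_of_hasFDerivAt (hasGradientAt_iff_hasFDerivAt.mp hx) y

end GradientInequality

namespace Seminorm

section DualNorm

variable {E : Type*} [NormedAddCommGroup E] [InnerProductSpace ℝ E] (p : Seminorm ℝ E)

noncomputable def dual (v : E) : ℝ := sSup {y | ∃ u, p u ≤ 1 ∧ y = ⟪u, v⟫}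

variable [FiniteDimensional ℝ E]

theorem exists_norm_le_mul (hp : ∀ x, p x = 0 → x = 0) : ∃ C, 0 < C ∧ ∀ x, ‖x‖ ≤ C * p x := by
  have hcont : Continuous p := p.convexOn.locallyLipschitz.continuous
  have hpos : ∀ x ∈ Metric.sphere (0 : E) 1, p x ≠ 0 := fun x hx h ↦
    ne_zero_of_mem_unit_sphere ⟨x, hx⟩ (hp x h)
  obtain ⟨C, hC⟩ := (isCompact_sphere (0 : E) 1).exists_bound_of_continuousOn
    (hcont.continuousOn.inv₀ hpos)
  refine ⟨max C 1, by positivity, fun x ↦ ?_⟩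
  rcases eq_or_ne x 0 with rfl | hx
  · simp
  have hx' : ‖x‖⁻¹ • x ∈ Metric.sphere (0 : E) 1 := by
    simp [norm_smul, hx]
  have hpx : 0 < p x := (apply_nonneg p x).lt_of_ne' fun h ↦ hx (hp x h)
  have hbound : (p (‖x‖⁻¹ • x))⁻¹ ≤ C := (le_abs_self _).trans (hC _ hx')
  rw [map_smul_eq_mul, norm_inv, norm_norm, mul_inv, inv_inv] at hbound
  calc ‖x‖ = (‖x‖ * (p x)⁻¹) * p x := by field_simp
    _ ≤ max C 1 * p x := by gcongr; exact hbound.trans (le_max_left _ _)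

theorem bddAbove_inner_of_apply_le_one (hp : ∀ x, p x = 0 → x = 0) (v : E) :
    BddAbove {y | ∃ u, p u ≤ 1 ∧ y = ⟪u, v⟫} := by
  obtain ⟨C, hC, hnorm⟩ := p.exists_norm_le_mul hp
  refine ⟨C * ‖v‖, ?_⟩
  rintro _ ⟨u, hu, rfl⟩
  calc ⟪u, v⟫ ≤ ‖u‖ * ‖v‖ := real_inner_le_norm u v
    _ ≤ C * ‖v‖ := by gcongr; exact (hnorm u).trans (mul_le_of_le_one_right hC.le hu)

theorem inner_le_dual_mul (hp : ∀ x, p x = 0 → x = 0) (v w : E) : ⟪w, v⟫ ≤ p.dual v * p w := by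
  rcases eq_or_ne w 0 with rfl | hw
  · simp
  have hpw : 0 < p w := (apply_nonneg p w).lt_of_ne' fun h ↦ hw (hp w h)
  have hunit : p ((p w)⁻¹ • w) ≤ 1 := by
    rw [map_smul_eq_mul, Real.norm_eq_abs, abs_inv, abs_of_pos hpw, inv_mul_cancel₀ hpw.ne']
  have hle : ⟪(p w)⁻¹ • w, v⟫ ≤ p.dual v :=
    le_csSup (p.bddAbove_inner_of_apply_le_one hp v) ⟨_, hunit, rfl⟩
  rw [real_inner_smul_left] at hle
  calc ⟪w, v⟫ = (p w)⁻¹ * ⟪w, v⟫ * p w := by field_simp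
    _ ≤ p.dual v * p w := by gcongr

theorem two_mul_sub_le_of_regularized_le [CompleteSpace E] (hp : ∀ x, p x = 0 → x = 0)
    {L : E → ℝ} {g θ θ' : E} {lam : ℝ} (hL : ConvexOn ℝ univ L) (hg : HasGradientAt L g θ)
    (hlam_pos : 0 < lam) (hlam : 2 * p.dual g ≤ lam)
    (hmin : L θ' + lam * p θ' ≤ L θ + lam * p θ) :
    2 * (p θ' - p θ) ≤ p (θ' - θ) := by
  have hgrad : L θ + ⟪g, θ' - θ⟫ ≤ L θ' := hL.add_inner_le_of_hasGradientAt hg θ'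
  have hdual : ⟪-(θ' - θ), g⟫ ≤ p.dual g * p (θ' - θ) := by
    simpa only [map_neg_eq_map] using p.inner_le_dual_mul hp g (-(θ' - θ))
  rw [inner_neg_left, real_inner_comm] at hdual
  have hscaled : p.dual g * p (θ' - θ) ≤ lam / 2 * p (θ' - θ) := by
    gcongr
    linarith
  have : lam * (2 * (p θ' - p θ)) ≤ lam * p (θ' - θ) := by linarith
  exact le_of_mul_le_mul_left this hlam_pos

end DualNorm

theorem sub_sub_two_mul_le_of_map_add {𝕜 E : Type*} [SeminormedRing 𝕜] [AddCommGroup E]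
    [SMul 𝕜 E] (p : Seminorm 𝕜 E) {θ₁ θ₂ Δ₁ Δ₂ : E} (h : p (θ₁ + Δ₂) = p θ₁ + p Δ₂) :
    p Δ₂ - p Δ₁ - 2 * p θ₂ ≤ p (θ₁ + θ₂ + (Δ₁ + Δ₂)) - p (θ₁ + θ₂) := by
  have hlower : p (θ₁ + Δ₂) ≤ p (θ₁ + θ₂ + (Δ₁ + Δ₂)) + p θ₂ + p Δ₁ := by
    calc p (θ₁ + Δ₂) = p (θ₁ + θ₂ + (Δ₁ + Δ₂) - (θ₂ + Δ₁)) := by congr 1; abel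
      _ ≤ p (θ₁ + θ₂ + (Δ₁ + Δ₂)) + p (θ₂ + Δ₁) := map_sub_le_add p _ _
      _ ≤ p (θ₁ + θ₂ + (Δ₁ + Δ₂)) + (p θ₂ + p Δ₁) := by gcongr; exact map_add_le_add p _ _
      _ = _ := by ring
  linarith [map_add_le_add p θ₁ θ₂]

end Seminorm

theorem stmt1_general {p : ℕ}
    (L : EuclideanSpace ℝ (Fin p) → ℝ)
    (hL_convex : ConvexOn ℝ Set.univ L)
    (hL_diff : Differentiable ℝ L)
    (R Rstar : EuclideanSpace ℝ (Fin p) → ℝ)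
    (hR_add : ∀ x y, R (x + y) ≤ R x + R y)
    (hR_smul : ∀ (c : ℝ) (x : EuclideanSpace ℝ (Fin p)), R (c • x) = |c| * R x)
    (hR_def : ∀ x, R x = 0 → x = 0)
    (hRstar : ∀ v, Rstar v = sSup {y | ∃ u, R u ≤ 1 ∧ y = ⟪u, v⟫})
    (M Mbar : Submodule ℝ (EuclideanSpace ℝ (Fin p)))
    (hdecomp : ∀ θ ∈ M, ∀ γ ∈ Mbarᗮ, R (θ + γ) = R θ + R γ)
    (θs : EuclideanSpace ℝ (Fin p))
    (lam : ℝ) (hlam_pos : 0 < lam)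
    (hlam : 2 * Rstar (gradient L θs) ≤ lam)
    (θhat : EuclideanSpace ℝ (Fin p))
    (hmin : ∀ θ, L θhat + lam * R θhat ≤ L θ + lam * R θ) :
    R ((Submodule.orthogonalProjectionOnto Mbarᗮ (θhat - θs) : EuclideanSpace ℝ (Fin p)))
      ≤ 3 * R ((Submodule.orthogonalProjectionOnto Mbar (θhat - θs) : EuclideanSpace ℝ (Fin p)))
        + 4 * R ((Submodule.orthogonalProjectionOnto Mᗮ θs : EuclideanSpace ℝ (Fin p))) := by
  let R' : Seminorm ℝ (EuclideanSpace ℝ (Fin p)) :=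
    Seminorm.of R hR_add fun c x ↦ by rw [hR_smul, Real.norm_eq_abs]
  have hdual : R'.dual (gradient L θs) = Rstar (gradient L θs) := (hRstar _).symm
  have hbasic : 2 * (R θhat - R θs) ≤ R (θhat - θs) :=
    R'.two_mul_sub_le_of_regularized_le hR_def hL_convex (hL_diff θs).hasGradientAt hlam_pos
      (hdual ▸ hlam) (hmin θs)
  simp only [Submodule.coe_orthogonalProjectionOnto_apply]
  have hdecomposed : R (Mbarᗮ.starProjection (θhat - θs)) - R (Mbar.starProjection (θhat - θs))
      - 2 * R (Mᗮ.starProjection θs) ≤ R θhat - R θs := by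
    have := R'.sub_sub_two_mul_le_of_map_add
      (θ₁ := M.starProjection θs) (θ₂ := Mᗮ.starProjection θs)
      (Δ₁ := Mbar.starProjection (θhat - θs)) (Δ₂ := Mbarᗮ.starProjection (θhat - θs))
      (hdecomp _ (M.starProjection_apply_mem θs) _ (Mbarᗮ.starProjection_apply_mem _))
    rwa [M.starProjection_add_starProjection_orthogonal,
      Mbar.starProjection_add_starProjection_orthogonal, add_sub_cancel] at this
  have htriangle := hR_add (Mbar.starProjection (θhat - θs)) (Mbarᗮ.starProjection (θhat - θs))
  rw [Mbar.starProjection_add_starProjection_orthogonal] at htriangle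
  linarith

/-- If `θ̂` minimizes `L + λR` with `λ ≥ 2 R*(∇L(θ*))`, then the error `Δ = θ̂ − θ*`
satisfies the cone inequality `R(Δ_{M̄ᗮ}) ≤ 3 R(Δ_{M̄}) + 4 R(θ*_{Mᗮ})`. -/
theorem stmt1 {p : ℕ}
    (L : EuclideanSpace ℝ (Fin p) → ℝ)
    (hL_convex : ConvexOn ℝ Set.univ L)
    (hL_diff : Differentiable ℝ L)
    (R Rstar : EuclideanSpace ℝ (Fin p) → ℝ)
    (hR_nonneg : ∀ x, 0 ≤ R x)
    (hR_add : ∀ x y, R (x + y) ≤ R x + R y)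
    (hR_smul : ∀ (c : ℝ) (x : EuclideanSpace ℝ (Fin p)), R (c • x) = |c| * R x)
    (hR_def : ∀ x, R x = 0 → x = 0)
    (hRstar : ∀ v, Rstar v = sSup {y | ∃ u, R u ≤ 1 ∧ y = ⟪u, v⟫})
    (M Mbar : Submodule ℝ (EuclideanSpace ℝ (Fin p)))
    (hMM : M ≤ Mbar)
    (hdecomp : ∀ θ ∈ M, ∀ γ ∈ Mbarᗮ, R (θ + γ) = R θ + R γ)
    (θs : EuclideanSpace ℝ (Fin p))
    (lam : ℝ) (hlam_pos : 0 < lam)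
    (hlam : 2 * Rstar (gradient L θs) ≤ lam)
    (θhat : EuclideanSpace ℝ (Fin p))
    (hmin : ∀ θ, L θhat + lam * R θhat ≤ L θ + lam * R θ) :
    R ((Submodule.orthogonalProjectionOnto Mbarᗮ (θhat - θs) : EuclideanSpace ℝ (Fin p)))
      ≤ 3 * R ((Submodule.orthogonalProjectionOnto Mbar (θhat - θs) : EuclideanSpace ℝ (Fin p)))
        + 4 * R ((Submodule.orthogonalProjectionOnto Mᗮ θs : EuclideanSpace ℝ (Fin p))) :=
  stmt1_general L hL_convex hL_diff R Rstar hR_add hR_smul hR_def hRstar M Mbar hdecomp θs lam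
    hlam_pos hlam θhat hmin
end

section
/- Let L : R^p → R be convex and differentiable, let R be a norm with dual norm R*, and fix δ* ∈ R^p with R(δ*) ≤ l. Let δ̂ be a minimizer of δ ↦ L(δ) + λ R(δ) with λ ≥ 2 R*(∇L(δ*)). Then the error Δ̂ = δ̂ − δ* satisfies R(Δ̂) ≤ 4 l. -/
/-!
Convexity gives `L δhat ≥ L δs + ⟪∇L δs, Δ⟫` with `Δ = δhat - δs`, and the dual-norm inequality
bounds `-⟪∇L δs, Δ⟫` by `(λ/2) R Δ`. Comparing the objective at `δhat` and at `δs` therefore gives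
`λ R δhat ≤ (λ/2) R Δ + λ R δs`, and the triangle inequality `R Δ ≤ R δhat + R δs` turns this into
`R Δ ≤ 4 R δs`. The dual norm is a genuine supremum because a definite seminorm on a
finite-dimensional space dominates a multiple of the Euclidean norm.
-/

open scoped RealInnerProductSpace

theorem ConvexOn.add_fderiv_sub_le {E : Type*} [NormedAddCommGroup E] [NormedSpace ℝ E]
    {f : E → ℝ} {f' : E →L[ℝ] ℝ} {x : E} (hf : ConvexOn ℝ Set.univ f)
    (hx : HasFDerivAt f f' x) (y : E) : f x + f' (y - x) ≤ f y := by
  set φ : ℝ →ᵃ[ℝ] E := AffineMap.lineMap x y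
  have hderiv : HasDerivAt (f ∘ φ) (f' (y - x)) 0 := by
    have hx' : HasFDerivAt f f' (φ 0) := by simpa [φ] using hx
    exact hx'.comp_hasDerivAt 0 AffineMap.hasDerivAt_lineMap
  have := (hf.comp_affineMap φ).le_slope_of_hasDerivAt (Set.mem_univ 0) (Set.mem_univ 1)
    one_pos hderiv
  simp only [slope_def_field, Function.comp_apply, φ, AffineMap.lineMap_apply_one,
    AffineMap.lineMap_apply_zero, sub_zero, div_one] at this
  linarith

namespace Seminorm

variable {E : Type*}

section Normed

variable [NormedAddCommGroup E] [NormedSpace ℝ E] [FiniteDimensional ℝ E]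

theorem exists_pos_mul_norm_le (q : Seminorm ℝ E) (hq : ∀ x, q x = 0 → x = 0) :
    ∃ c > 0, ∀ x, c * ‖x‖ ≤ q x := by
  rcases subsingleton_or_nontrivial E with _ | _
  · exact ⟨1, one_pos, fun x => by simp [Subsingleton.elim x 0]⟩
  have hcont : Continuous q := continuousOn_univ.mp (q.convexOn.continuousOn isOpen_univ)
  obtain ⟨z, hz, hzmin⟩ := (isCompact_sphere (0 : E) 1).exists_isMinOn
    (NormedSpace.sphere_nonempty.mpr zero_le_one) hcont.continuousOn
  have hz1 : ‖z‖ = 1 := mem_sphere_zero_iff_norm.mp hz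
  have hqz : 0 < q z :=
    (apply_nonneg q z).lt_of_ne fun h => by simp [hq z h.symm] at hz1
  refine ⟨q z, hqz, fun x => ?_⟩
  rcases eq_or_ne x 0 with rfl | hx
  · simp
  have hx' : 0 < ‖x‖ := norm_pos_iff.mpr hx
  have hunit : ‖x‖⁻¹ • x ∈ Metric.sphere (0 : E) 1 := by
    rw [mem_sphere_zero_iff_norm, norm_smul, norm_inv, norm_norm, inv_mul_cancel₀ hx'.ne']
  have := isMinOn_iff.mp hzmin _ hunit
  rw [map_smul_eq_mul, norm_inv, norm_norm] at this
  rwa [le_inv_mul_iff₀ hx', mul_comm] at this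

end Normed

section Inner

variable [NormedAddCommGroup E] [InnerProductSpace ℝ E]

-- Junk value `0` when the set is unbounded; `bddAbove_inner_of_le_one` rules this out.
noncomputable def dualNorm (q : Seminorm ℝ E) (v : E) : ℝ :=
  sSup {y | ∃ u, q u ≤ 1 ∧ y = ⟪u, v⟫}

variable [FiniteDimensional ℝ E]

theorem bddAbove_inner_of_le_one (q : Seminorm ℝ E) (hq : ∀ x, q x = 0 → x = 0) (v : E) :
    BddAbove {y | ∃ u, q u ≤ 1 ∧ y = ⟪u, v⟫} := by
  obtain ⟨c, hc, hcq⟩ := q.exists_pos_mul_norm_le hq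
  refine ⟨1 / c * ‖v‖, ?_⟩
  rintro _ ⟨u, hu, rfl⟩
  have hu' : ‖u‖ ≤ 1 / c := (le_div_iff₀' hc).mpr ((hcq u).trans hu)
  calc ⟪u, v⟫ ≤ ‖u‖ * ‖v‖ := real_inner_le_norm u v
    _ ≤ 1 / c * ‖v‖ := by gcongr

theorem inner_le_dualNorm_mul (q : Seminorm ℝ E) (hq : ∀ x, q x = 0 → x = 0) (u v : E) :
    ⟪u, v⟫ ≤ q.dualNorm v * q u := by
  rcases eq_or_ne (q u) 0 with hu | hu
  · simp [hq u hu]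
  have hqu : 0 < q u := (apply_nonneg q u).lt_of_ne' hu
  have hunit : q ((q u)⁻¹ • u) ≤ 1 := by
    rw [map_smul_eq_mul, Real.norm_eq_abs, abs_inv, abs_of_pos hqu, inv_mul_cancel₀ hu]
  have := le_csSup (q.bddAbove_inner_of_le_one hq v) ⟨_, hunit, rfl⟩
  rw [real_inner_smul_left, inv_mul_le_iff₀ hqu, mul_comm] at this
  exact this

theorem apply_sub_le_four_mul (q : Seminorm ℝ E) (hq : ∀ x, q x = 0 → x = 0)
    {L : E → ℝ} (hL : ConvexOn ℝ Set.univ L) {δs δhat : E} (hLδs : DifferentiableAt ℝ L δs)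
    {lam : ℝ} (hlam_pos : 0 < lam) (hlam : 2 * q.dualNorm (gradient L δs) ≤ lam)
    (hmin : L δhat + lam * q δhat ≤ L δs + lam * q δs) :
    q (δhat - δs) ≤ 4 * q δs := by
  set Δ := δhat - δs
  have hfirst : L δs + ⟪gradient L δs, Δ⟫ ≤ L δhat := by
    rw [inner_gradient_left]
    exact hL.add_fderiv_sub_le hLδs.hasFDerivAt δhat
  have hdual : -⟪gradient L δs, Δ⟫ ≤ lam / 2 * q Δ := by
    calc -⟪gradient L δs, Δ⟫ = ⟪-Δ, gradient L δs⟫ := by rw [inner_neg_left, real_inner_comm]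
      _ ≤ q.dualNorm (gradient L δs) * q (-Δ) := q.inner_le_dualNorm_mul hq _ _
      _ ≤ lam / 2 * q Δ := by rw [map_neg_eq_map]; gcongr; linarith
  have hbasic : lam * q δhat ≤ lam / 2 * q Δ + lam * q δs := by linarith
  have htri : lam * q Δ ≤ lam * q δhat + lam * q δs := by
    rw [← mul_add]; exact mul_le_mul_of_nonneg_left (map_sub_le_add q δhat δs) hlam_pos.le
  have : lam / 2 * q Δ ≤ lam / 2 * (4 * q δs) := by linarith
  exact le_of_mul_le_mul_left this (half_pos hlam_pos)

end Inner

end Seminorm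

theorem stmt5_general {p : ℕ}
    (L : EuclideanSpace ℝ (Fin p) → ℝ)
    (hL_convex : ConvexOn ℝ Set.univ L)
    (hL_diff : Differentiable ℝ L)
    (R Rstar : EuclideanSpace ℝ (Fin p) → ℝ)
    (hR_add : ∀ x y, R (x + y) ≤ R x + R y)
    (hR_smul : ∀ (c : ℝ) (x : EuclideanSpace ℝ (Fin p)), R (c • x) = |c| * R x)
    (hR_def : ∀ x, R x = 0 → x = 0)
    (hRstar : ∀ v, Rstar v = sSup {y | ∃ u, R u ≤ 1 ∧ y = ⟪u, v⟫})
    (δs : EuclideanSpace ℝ (Fin p)) (l : ℝ) (hδs : R δs ≤ l)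
    (lam : ℝ) (hlam_pos : 0 < lam)
    (hlam : 2 * Rstar (gradient L δs) ≤ lam)
    (δhat : EuclideanSpace ℝ (Fin p))
    (hmin : ∀ δ, L δhat + lam * R δhat ≤ L δ + lam * R δ) :
    R (δhat - δs) ≤ 4 * l := by
  let q : Seminorm ℝ (EuclideanSpace ℝ (Fin p)) := .of R hR_add hR_smul
  have hRstar_eq : Rstar = q.dualNorm := funext hRstar
  calc R (δhat - δs) ≤ 4 * R δs :=
        q.apply_sub_le_four_mul hR_def hL_convex (hL_diff δs) hlam_pos (hRstar_eq ▸ hlam)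
          (hmin δs)
    _ ≤ 4 * l := by linarith

/-- Cone-type bound for Lagrangian fine-tuning: if `δ̂` minimizes `L + λR` with
`λ ≥ 2 R*(∇L(δ*))` and `R(δ*) ≤ l`, then `R(δ̂ − δ*) ≤ 4 l`. -/
theorem stmt5 {p : ℕ}
    (L : EuclideanSpace ℝ (Fin p) → ℝ)
    (hL_convex : ConvexOn ℝ Set.univ L)
    (hL_diff : Differentiable ℝ L)
    (R Rstar : EuclideanSpace ℝ (Fin p) → ℝ)
    (hR_nonneg : ∀ x, 0 ≤ R x)
    (hR_add : ∀ x y, R (x + y) ≤ R x + R y)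
    (hR_smul : ∀ (c : ℝ) (x : EuclideanSpace ℝ (Fin p)), R (c • x) = |c| * R x)
    (hR_def : ∀ x, R x = 0 → x = 0)
    (hRstar : ∀ v, Rstar v = sSup {y | ∃ u, R u ≤ 1 ∧ y = ⟪u, v⟫})
    (δs : EuclideanSpace ℝ (Fin p)) (l : ℝ) (hδs : R δs ≤ l)
    (lam : ℝ) (hlam_pos : 0 < lam)
    (hlam : 2 * Rstar (gradient L δs) ≤ lam)
    (δhat : EuclideanSpace ℝ (Fin p))
    (hmin : ∀ δ, L δhat + lam * R δhat ≤ L δ + lam * R δ) :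
    R (δhat - δs) ≤ 4 * l :=
  stmt5_general L hL_convex hL_diff R Rstar hR_add hR_smul hR_def hRstar δs l hδs lam hlam_pos hlam
    δhat hmin
end

section
/- Let θ ∈ R^{d₁×d₂} have rank at most r, with reduced singular value decomposition θ = U^r D (V^r)ᵀ where U^r, V^r have r orthonormal columns. Define the subspace M̄ = {A : row(A) ⊆ col(V^r) or col(A) ⊆ col(U^r)}^⊥⊥ as the orthogonal complement of M̄^⊥ := {A : row(A) ⊥ col(V^r) and col(A) ⊥ col(U^r)}. Then every matrix Δ ∈ M̄ has rank at most 2r, and consequently ‖Δ‖_N ≤ √(2r) ‖Δ‖_F for all Δ ∈ M̄. -/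
/-!
Write `P = U Uᵀ`. For `Δ ∈ M̄`, the matrix `B = (Δ - P Δ)(1 - V Vᵀ)` lies in `M̄^⊥`, and `Δ - B` is
orthogonal to `M̄^⊥`; hence `B` is orthogonal to itself, so `B = 0` and
`Δ = U (Uᵀ Δ) + ((Δ - P Δ) V) Vᵀ`, a sum of two matrices of rank at most `r`.
The nuclear norm is `∑ √λᵢ` over the eigenvalues of `ΔᵀΔ`, of which at most `rank Δ` are
nonzero, while `∑ λᵢ = ‖Δ‖_F²`; Cauchy–Schwarz gives `‖Δ‖_N ≤ √(rank Δ) ‖Δ‖_F`.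
-/

open Matrix Finset

theorem Real.sum_sqrt_le_sqrt_card_ne_zero_mul_sqrt_sum {ι : Type*} [Fintype ι] {f : ι → ℝ}
    (hf : ∀ i, 0 ≤ f i) :
    ∑ i, √(f i) ≤ √(#{i | f i ≠ 0} : ℕ) * √(∑ i, f i) := by
  set t : Finset ι := {i | f i ≠ 0}
  have hsupp : ∑ i ∈ t, √(f i) = ∑ i, √(f i) :=
    sum_filter_of_ne fun i _ hi hfi => hi (by rw [hfi, Real.sqrt_zero])
  rw [← hsupp, ← Real.sqrt_mul (Nat.cast_nonneg _)]
  refine Real.le_sqrt_of_sq_le ?_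
  calc (∑ i ∈ t, √(f i)) ^ 2 ≤ #t * ∑ i ∈ t, √(f i) ^ 2 := sq_sum_le_card_mul_sum_sq
    _ = #t * ∑ i ∈ t, f i := by simp only [Real.sq_sqrt (hf _)]
    _ ≤ #t * ∑ i, f i :=
        mul_le_mul_of_nonneg_left (sum_le_univ_sum_of_nonneg hf) (Nat.cast_nonneg _)

namespace Matrix

section Rank

variable {m n k l R : Type*} [Fintype n] [Field R]

theorem rank_add_le (A B : Matrix m n R) : (A + B).rank ≤ A.rank + B.rank := by
  have hrange : LinearMap.range (A + B).mulVecLin ≤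
      LinearMap.range A.mulVecLin ⊔ LinearMap.range B.mulVecLin := by
    rintro x ⟨v, rfl⟩
    rw [mulVecLin_add]
    exact Submodule.add_mem_sup ⟨v, rfl⟩ ⟨v, rfl⟩
  exact (Submodule.finrank_mono hrange).trans
    (Submodule.finrank_add_le_finrank_add_finrank _ _)

theorem rank_mul_add_mul_le [Fintype k] [Fintype l] (U : Matrix m k R)
    (X : Matrix k n R) (Y : Matrix m l R) (W : Matrix l n R) :
    (U * X + Y * W).rank ≤ Fintype.card k + Fintype.card l :=
  (rank_add_le _ _).trans <| add_le_add
    ((rank_mul_le_left U X).trans U.rank_le_card_width)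
    ((rank_mul_le_right Y W).trans W.rank_le_card_height)

end Rank

section Orthogonal

variable {m n k l : Type*} [Fintype m] [Fintype n] [Fintype k] [Fintype l]
  [DecidableEq k] [DecidableEq l]

omit [Fintype n] in
theorem transpose_mul_sub_mul_transpose_mul {U : Matrix m k ℝ} (hU : Uᵀ * U = 1)
    (A : Matrix m n ℝ) : Uᵀ * (A - U * (Uᵀ * A)) = 0 := by
  rw [Matrix.mul_sub, ← Matrix.mul_assoc, hU, Matrix.one_mul, sub_self]

omit [Fintype m] in
theorem sub_mul_mul_transpose_mul {V : Matrix n l ℝ} (hV : Vᵀ * V = 1)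
    (A : Matrix m n ℝ) : (A - A * V * Vᵀ) * V = 0 := by
  rw [Matrix.sub_mul, Matrix.mul_assoc _ Vᵀ, hV, Matrix.mul_one, sub_self]

theorem eq_zero_of_trace_transpose_mul_eq_zero {B Δ : Matrix m n ℝ}
    (hΔ : trace (Bᵀ * Δ) = 0) (hΔB : trace (Bᵀ * (Δ - B)) = 0) : B = 0 := by
  rw [← trace_conjTranspose_mul_self_eq_zero_iff, conjTranspose_eq_transpose_of_trivial]
  simpa [Matrix.mul_sub, hΔ] using hΔB

theorem eq_mul_add_mul_of_forall_trace_transpose_mul_eq_zero {U : Matrix m k ℝ}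
    {V : Matrix n l ℝ} (hU : Uᵀ * U = 1) (hV : Vᵀ * V = 1) {Δ : Matrix m n ℝ}
    (hΔ : ∀ B : Matrix m n ℝ, Uᵀ * B = 0 → B * V = 0 → trace (Bᵀ * Δ) = 0) :
    Δ = U * (Uᵀ * Δ) + (Δ - U * (Uᵀ * Δ)) * V * Vᵀ := by
  set E := Δ - U * (Uᵀ * Δ)
  set B := E - E * V * Vᵀ
  have hUE : Uᵀ * E = 0 := transpose_mul_sub_mul_transpose_mul hU Δ
  have hUB : Uᵀ * B = 0 := by
    simp only [B, Matrix.mul_sub, ← Matrix.mul_assoc, hUE, Matrix.zero_mul, sub_zero]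
  have hBV : B * V = 0 := sub_mul_mul_transpose_mul hV E
  have hBU : Bᵀ * U = 0 := by simpa using congrArg transpose hUB
  have hVB : Vᵀ * Bᵀ = 0 := by simpa using congrArg transpose hBV
  have hB : B = 0 := by
    refine eq_zero_of_trace_transpose_mul_eq_zero (hΔ B hUB hBV) ?_
    have hΔB : Δ - B = U * (Uᵀ * Δ) + E * V * Vᵀ := by simp only [B, E]; abel
    rw [hΔB, Matrix.mul_add, trace_add, ← Matrix.mul_assoc, hBU, Matrix.zero_mul, trace_zero,
      zero_add, ← Matrix.mul_assoc, trace_mul_comm, ← Matrix.mul_assoc, hVB, Matrix.zero_mul,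
      trace_zero]
  rw [← sub_eq_zero.mp hB, add_sub_cancel]

end Orthogonal

section Spectrum

variable {m n : Type*} [Fintype m] [Fintype n] [DecidableEq n]

theorem IsHermitian.sum_eigenvalues_transpose_mul_self {A : Matrix m n ℝ}
    (hA : (Aᵀ * A).IsHermitian) : ∑ i, hA.eigenvalues i = ∑ i, ∑ j, A i j ^ 2 := by
  have htrace := hA.trace_eq_sum_eigenvalues
  simp only [RCLike.ofReal_real_eq_id, id] at htrace
  rw [← htrace, sum_comm]
  simp [trace, mul_apply, sq]

theorem IsHermitian.card_eigenvalues_transpose_mul_self_ne_zero {A : Matrix m n ℝ}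
    (hA : (Aᵀ * A).IsHermitian) : #{i | hA.eigenvalues i ≠ 0} = A.rank := by
  rw [← Fintype.card_subtype, ← hA.rank_eq_card_non_zero_eigs,
    ← conjTranspose_eq_transpose_of_trivial, rank_conjTranspose_mul_self]

theorem IsHermitian.sum_sqrt_eigenvalues_transpose_mul_self_le {A : Matrix m n ℝ}
    (hA : (Aᵀ * A).IsHermitian) :
    ∑ i, √(hA.eigenvalues i) ≤ √A.rank * √(∑ i, ∑ j, A i j ^ 2) := by
  rw [← hA.card_eigenvalues_transpose_mul_self_ne_zero, ← hA.sum_eigenvalues_transpose_mul_self]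
  refine Real.sum_sqrt_le_sqrt_card_ne_zero_mul_sqrt_sum fun i => ?_
  have hpsd := posSemidef_conjTranspose_mul_self A
  rw [conjTranspose_eq_transpose_of_trivial] at hpsd
  exact hpsd.eigenvalues_nonneg i

end Spectrum

end Matrix

theorem stmt10 {d₁ d₂ r : ℕ}
    (U : Matrix (Fin d₁) (Fin r) ℝ) (V : Matrix (Fin d₂) (Fin r) ℝ)
    (hU : Uᵀ * U = 1) (hV : Vᵀ * V = 1)
    (Δ : Matrix (Fin d₁) (Fin d₂) ℝ)
    (hΔ : ∀ B : Matrix (Fin d₁) (Fin d₂) ℝ, Uᵀ * B = 0 → B * V = 0 →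
      Matrix.trace (Bᵀ * Δ) = 0) :
    Δ.rank ≤ 2 * r ∧
      (∑ i, Real.sqrt ((show (Δᵀ * Δ).IsHermitian by
        simpa using Matrix.isHermitian_conjTranspose_mul_self Δ).eigenvalues i))
        ≤ Real.sqrt (2 * r) * Real.sqrt (∑ i, ∑ j, (Δ i j) ^ 2) := by
  have hrank : Δ.rank ≤ 2 * r := by
    rw [eq_mul_add_mul_of_forall_trace_transpose_mul_eq_zero hU hV hΔ]
    simpa [two_mul] using rank_mul_add_mul_le U (Uᵀ * Δ) ((Δ - U * (Uᵀ * Δ)) * V) Vᵀ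
  refine ⟨hrank, (IsHermitian.sum_sqrt_eigenvalues_transpose_mul_self_le _).trans ?_⟩
  gcongr
  exact_mod_cast hrank
end

section
/- The nuclear norm ‖·‖_N on R^{d₁×d₂} is decomposable with respect to the pair (M, M̄^⊥) associated with a rank-r matrix θ* = U^r D (V^r)ᵀ: for every A ∈ M := {θ : row(θ) ⊆ col(V^r), col(θ) ⊆ col(U^r)} and every B ∈ M̄^⊥ := {θ : row(θ) ⊥ col(V^r), col(θ) ⊥ col(U^r)}, one has ‖A + B‖_N = ‖A‖_N + ‖B‖_N. -/
open Matrix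

theorem Matrix.isHermitian_transpose_mul_self {α m n : Type*} [Fintype m] [NonUnitalSemiring α]
    [StarRing α] [TrivialStar α] (A : Matrix m n α) : (Aᵀ * A).IsHermitian := by
  rw [← conjTranspose_eq_transpose_of_trivial]
  exact isHermitian_conjTranspose_mul_self A

/-!
The nuclear norm of `A` is the trace of `√(AᵀA)`. If `AᵀB = 0` and `ABᵀ = 0`, then
`(A + B)ᵀ(A + B) = AᵀA + BᵀB` and the two summands annihilate each other; the square roots of
two annihilating positive semidefinite matrices annihilate each other too, so
`√(AᵀA + BᵀB) = √(AᵀA) + √(BᵀB)` and the trace splits. The hypotheses on `A` and `B` give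
`AᵀB = 0` through the columns (`A = UUᵀA`, `UᵀB = 0`) and `ABᵀ = 0` through the rows.
-/

namespace Matrix

section Orthogonality

variable {l m k : Type*} [Fintype l] [Fintype m] [Fintype k] [DecidableEq m] [DecidableEq k]

theorem mul_transpose_mul_of_range_le {U : Matrix l k ℝ} {A : Matrix l m ℝ} (hU : Uᵀ * U = 1)
    (hA : LinearMap.range A.toLin' ≤ LinearMap.range U.toLin') : U * Uᵀ * A = A := by
  refine toLin'.injective (LinearMap.ext fun v => ?_)
  obtain ⟨y, hy⟩ := hA (LinearMap.mem_range_self A.toLin' v)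
  simp only [toLin'_apply, ← mulVec_mulVec] at hy ⊢
  rw [← hy, mulVec_mulVec y Uᵀ U, hU, one_mulVec]

theorem transpose_mul_eq_zero_of_range_le {U : Matrix l k ℝ} {A B : Matrix l m ℝ}
    (hU : Uᵀ * U = 1) (hA : LinearMap.range A.toLin' ≤ LinearMap.range U.toLin')
    (hB : Uᵀ * B = 0) : Aᵀ * B = 0 := by
  rw [← mul_transpose_mul_of_range_le hU hA, transpose_mul, transpose_mul, transpose_transpose,
    Matrix.mul_assoc, Matrix.mul_assoc, hB, Matrix.mul_zero, Matrix.mul_zero]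

theorem transpose_mul_eq_zero_of_dotProduct_mulVec {U : Matrix l k ℝ} {B : Matrix l m ℝ}
    (h : ∀ x y, B *ᵥ x ⬝ᵥ U *ᵥ y = 0) : Uᵀ * B = 0 := by
  ext i j
  simpa [dotProduct, mul_apply, mul_comm] using h (Pi.single j 1) (Pi.single i 1)

end Orthogonality

open scoped MatrixOrder

variable {m n : Type*} [Fintype m] [Fintype n]

theorem posSemidef_transpose_mul_self (A : Matrix m n ℝ) : (Aᵀ * A).PosSemidef := by
  simpa using posSemidef_conjTranspose_mul_self A

variable [DecidableEq n]

noncomputable def nuclearNorm (A : Matrix m n ℝ) : ℝ :=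
  ∑ i, √((isHermitian_transpose_mul_self A).eigenvalues i)

theorem PosSemidef.trace_sqrt {M : Matrix n n ℝ} (hM : M.PosSemidef) :
    (CFC.sqrt M).trace = ∑ i, √(hM.1.eigenvalues i) := by
  rw [CFC.sqrt_eq_cfc, cfc_nnreal_eq_real _ M, hM.1.cfc_eq, IsHermitian.cfc,
    Unitary.conjStarAlgAut_apply, trace_mul_cycle]
  simp [hM.eigenvalues_nonneg]

theorem nuclearNorm_eq_trace_sqrt (A : Matrix m n ℝ) :
    nuclearNorm A = (CFC.sqrt (Aᵀ * A)).trace :=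
  (posSemidef_transpose_mul_self A).trace_sqrt.symm

theorem PosSemidef.sqrt_mul_sqrt_eq_zero {M N : Matrix n n ℝ} (hM : M.PosSemidef)
    (hN : N.PosSemidef) (h : M * N = 0) : CFC.sqrt M * CFC.sqrt N = 0 := by
  set X := CFC.sqrt M * CFC.sqrt N
  have hXX : Xᴴ * X = CFC.sqrt N * M * CFC.sqrt N := by
    rw [conjTranspose_mul, (CFC.sqrt_nonneg M).posSemidef.1, (CFC.sqrt_nonneg N).posSemidef.1]
    calc CFC.sqrt N * CFC.sqrt M * (CFC.sqrt M * CFC.sqrt N)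
        = CFC.sqrt N * (CFC.sqrt M * CFC.sqrt M) * CFC.sqrt N := by noncomm_ring
      _ = CFC.sqrt N * M * CFC.sqrt N := by rw [CFC.sqrt_mul_sqrt_self M hM.nonneg]
  -- `(XᴴX)² = √N (M N M) √N = 0`, and a positive semidefinite matrix with zero square is zero.
  have hsq : (Xᴴ * X) ^ 2 = (0 : Matrix n n ℝ) ^ 2 := by
    calc (Xᴴ * X) ^ 2
        = CFC.sqrt N * M * (CFC.sqrt N * CFC.sqrt N) * M * CFC.sqrt N := by
          rw [hXX]; noncomm_ring
      _ = CFC.sqrt N * (M * N * M) * CFC.sqrt N := by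
          rw [CFC.sqrt_mul_sqrt_self N hN.nonneg]; noncomm_ring
      _ = 0 ^ 2 := by rw [h]; simp
  have hzero : Xᴴ * X = 0 :=
    (CFC.sq_eq_sq_iff _ _ (posSemidef_conjTranspose_mul_self X).nonneg le_rfl).mp hsq
  exact conjTranspose_mul_self_eq_zero.mp hzero

theorem PosSemidef.sqrt_add_of_mul_eq_zero {M N : Matrix n n ℝ} (hM : M.PosSemidef)
    (hN : N.PosSemidef) (h : M * N = 0) : CFC.sqrt (M + N) = CFC.sqrt M + CFC.sqrt N := by
  have h' : N * M = 0 := by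
    rw [← hM.1.eq, ← hN.1.eq, ← conjTranspose_mul, h, conjTranspose_zero]
  have hsq : (CFC.sqrt M + CFC.sqrt N) * (CFC.sqrt M + CFC.sqrt N) = M + N := by
    rw [add_mul, mul_add, mul_add, hM.sqrt_mul_sqrt_eq_zero hN h,
      hN.sqrt_mul_sqrt_eq_zero hM h', CFC.sqrt_mul_sqrt_self M hM.nonneg,
      CFC.sqrt_mul_sqrt_self N hN.nonneg, add_zero, zero_add]
  exact (CFC.sqrt_eq_iff _ _ (hM.add hN).nonneg
    (add_nonneg (CFC.sqrt_nonneg M) (CFC.sqrt_nonneg N))).mpr hsq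

theorem nuclearNorm_add_of_orthogonal {A B : Matrix m n ℝ} (hcol : Aᵀ * B = 0)
    (hrow : A * Bᵀ = 0) : nuclearNorm (A + B) = nuclearNorm A + nuclearNorm B := by
  have hBA : Bᵀ * A = 0 := by
    simpa [transpose_mul] using congrArg transpose hcol
  have hgram : (A + B)ᵀ * (A + B) = Aᵀ * A + Bᵀ * B := by
    simp [transpose_add, Matrix.add_mul, Matrix.mul_add, hcol, hBA]
  have hannihilate : Aᵀ * A * (Bᵀ * B) = 0 := by
    rw [Matrix.mul_assoc, ← Matrix.mul_assoc A, hrow, Matrix.zero_mul, Matrix.mul_zero]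
  rw [nuclearNorm_eq_trace_sqrt, nuclearNorm_eq_trace_sqrt, nuclearNorm_eq_trace_sqrt, hgram,
    (posSemidef_transpose_mul_self A).sqrt_add_of_mul_eq_zero
      (posSemidef_transpose_mul_self B) hannihilate, trace_add]

end Matrix

theorem stmt11_general {d₁ d₂ r : ℕ}
    (U : Matrix (Fin d₁) (Fin r) ℝ) (V : Matrix (Fin d₂) (Fin r) ℝ)
    (hU : Uᵀ * U = 1) (hV : Vᵀ * V = 1)
    (A B : Matrix (Fin d₁) (Fin d₂) ℝ)
    (hA_col : LinearMap.range (Matrix.toLin' A) ≤ LinearMap.range (Matrix.toLin' U))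
    (hA_row : LinearMap.range (Matrix.toLin' Aᵀ) ≤ LinearMap.range (Matrix.toLin' V))
    (hB_col : ∀ (x : Fin d₂ → ℝ) (y : Fin r → ℝ),
      dotProduct (B.mulVec x) (U.mulVec y) = 0)
    (hB_row : ∀ (x : Fin d₁ → ℝ) (y : Fin r → ℝ),
      dotProduct (Bᵀ.mulVec x) (V.mulVec y) = 0) :
    (∑ i, Real.sqrt ((Matrix.isHermitian_transpose_mul_self (A + B)).eigenvalues i)) =
      (∑ i, Real.sqrt ((Matrix.isHermitian_transpose_mul_self A).eigenvalues i)) +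
      (∑ i, Real.sqrt ((Matrix.isHermitian_transpose_mul_self B).eigenvalues i)) := by
  have hcol : Aᵀ * B = 0 :=
    transpose_mul_eq_zero_of_range_le hU hA_col
      (transpose_mul_eq_zero_of_dotProduct_mulVec hB_col)
  have hrow : A * Bᵀ = 0 := by
    simpa using transpose_mul_eq_zero_of_range_le hV hA_row
      (transpose_mul_eq_zero_of_dotProduct_mulVec hB_row)
  exact nuclearNorm_add_of_orthogonal hcol hrow

/-- Decomposability of the nuclear norm: if `A` has column space contained in `col(U)`
and row space contained in `col(V)`, while `B` has column space orthogonal to `col(U)`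
and row space orthogonal to `col(V)` (with `U, V` the singular factors of a rank-`r`
matrix `θ* = U D Vᵀ`), then `‖A + B‖_N = ‖A‖_N + ‖B‖_N`. -/
theorem stmt11 {d₁ d₂ r : ℕ}
    (U : Matrix (Fin d₁) (Fin r) ℝ) (V : Matrix (Fin d₂) (Fin r) ℝ)
    (D : Matrix (Fin r) (Fin r) ℝ)
    (hU : Uᵀ * U = 1) (hV : Vᵀ * V = 1)
    (θs : Matrix (Fin d₁) (Fin d₂) ℝ) (hθs : θs = U * D * Vᵀ)
    (A B : Matrix (Fin d₁) (Fin d₂) ℝ)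
    (hA_col : LinearMap.range (Matrix.toLin' A) ≤ LinearMap.range (Matrix.toLin' U))
    (hA_row : LinearMap.range (Matrix.toLin' Aᵀ) ≤ LinearMap.range (Matrix.toLin' V))
    (hB_col : ∀ (x : Fin d₂ → ℝ) (y : Fin r → ℝ),
      dotProduct (B.mulVec x) (U.mulVec y) = 0)
    (hB_row : ∀ (x : Fin d₁ → ℝ) (y : Fin r → ℝ),
      dotProduct (Bᵀ.mulVec x) (V.mulVec y) = 0) :
    (∑ i, Real.sqrt ((Matrix.isHermitian_transpose_mul_self (A + B)).eigenvalues i)) =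
      (∑ i, Real.sqrt ((Matrix.isHermitian_transpose_mul_self A).eigenvalues i)) +
      (∑ i, Real.sqrt ((Matrix.isHermitian_transpose_mul_self B).eigenvalues i)) :=
  stmt11_general U V hU hV A B hA_col hA_row hB_col hB_row
end
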